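/- (Ahlfors–Schwarz lemma, conformal metric form on the disk.) Let u : 𝔻 → ℝ be twice continuously differentiable on the open unit disk and suppose Δu(z) ≥ 4·e^{2u(z)} for all z ∈ 𝔻, where Δ is the standard Laplacian on ℝ² ≅ ℂ. Then for every z ∈ 𝔻, e^{u(z)} ≤ 1/(1 − |z|²); that is, any conformal metric on 𝔻 of Gauss curvature at most −1 is dominated by the Poincaré metric. -/

import Mathlib

open Complex

/-- The standard Laplacian on `ℝ² ≅ ℂ`: `Δu = ∂²u/∂x² + ∂²u/∂y²`, written as the sum of
second directional derivatives in the directions `1` and `i`. -/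
noncomputable def laplacian (u : ℂ → ℝ) (z : ℂ) : ℝ :=
  fderiv ℝ (fun w : ℂ => fderiv ℝ u w 1) z 1 +
    fderiv ℝ (fun w : ℂ => fderiv ℝ u w Complex.I) z Complex.I

open Filter Topology Set
open scoped RealInnerProductSpace

/-!
For `r < 1`, the function `F = e^u (r² - |z|²)` attains its maximum over the closed disk of
radius `r` at an interior point `z₀`, where `u + log (r² - |z|²)` then has a local maximum and
hence nonpositive Laplacian. Since `Δ log (r² - |z|²) = -4r² / (r² - |z|²)²`, the curvature
hypothesis yields `e^{2u(z₀)} ≤ r² / (r² - |z₀|²)²`, i.e. `F ≤ F(z₀) ≤ r`. Let `r → 1`.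
-/

lemma IsLocalMax.deriv_deriv_nonpos {f : ℝ → ℝ} {x : ℝ} (h : IsLocalMax f x)
    (hc : ContinuousAt f x) : deriv (deriv f) x ≤ 0 := by
  by_contra! hpos
  -- the second derivative test makes `x` a local minimum too, so `f` is locally constant
  have hconst : f =ᶠ[𝓝 x] fun _ => f x :=
    ((isLocalMin_of_deriv_deriv_pos hpos h.deriv_eq_zero hc).and h).mono
      fun y hy => le_antisymm hy.2 hy.1
  simp [hconst.deriv.deriv_eq] at hpos

section NormedSpace

variable {E F : Type*} [NormedAddCommGroup E] [NormedSpace ℝ E] [NormedAddCommGroup F]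
  [NormedSpace ℝ F]

lemma hasDerivAt_add_smul (z v : E) (t : ℝ) : HasDerivAt (fun t : ℝ => z + t • v) v t := by
  simpa using ((hasDerivAt_id t).smul_const v).const_add z

lemma fderiv_fderiv_apply_apply {f : E → F} {z : E} (hf : DifferentiableAt ℝ (fderiv ℝ f) z)
    (v w : E) : fderiv ℝ (fun y => fderiv ℝ f y v) z w = fderiv ℝ (fderiv ℝ f) z w v := by
  rw [fderiv_clm_apply hf (differentiableAt_const v)]
  simp

lemma ContDiffAt.differentiableAt_fderiv {f : E → F} {z : E} (hf : ContDiffAt ℝ 2 f z) :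
    DifferentiableAt ℝ (fderiv ℝ f) z :=
  (hf.fderiv_right (m := 1) (by norm_num)).differentiableAt (by norm_num)

lemma ContDiffAt.deriv_deriv_comp_line {g : E → ℝ} {z : E} (hg : ContDiffAt ℝ 2 g z) (v : E) :
    deriv (deriv fun t : ℝ => g (z + t • v)) 0 = fderiv ℝ (fun w => fderiv ℝ g w v) z v := by
  have hline := hasDerivAt_add_smul z v
  have hdiff : ∀ᶠ t in 𝓝 (0 : ℝ), DifferentiableAt ℝ g (z + t • v) := by
    refine (hline 0).continuousAt.eventually (p := fun y => DifferentiableAt ℝ g y) ?_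
    simpa using (hg.eventually (by simp)).mono fun y hy => hy.differentiableAt (by norm_num)
  have hfirst : deriv (fun t : ℝ => g (z + t • v)) =ᶠ[𝓝 0]
      fun t => fderiv ℝ g (z + t • v) v := by
    filter_upwards [hdiff] with t ht
    exact (ht.hasFDerivAt.comp_hasDerivAt t (hline t)).deriv
  have hsecond := (hg.differentiableAt_fderiv.clm_apply (differentiableAt_const v)).hasFDerivAt
  rw [hfirst.deriv_eq]
  exact (hsecond.comp_hasDerivAt_of_eq (0 : ℝ) (hline 0) (by simp)).deriv

lemma IsLocalMax.fderiv_fderiv_apply_nonpos {g : E → ℝ} {z : E} (h : IsLocalMax g z)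
    (hg : ContDiffAt ℝ 2 g z) (v : E) : fderiv ℝ (fun w => fderiv ℝ g w v) z v ≤ 0 := by
  rw [← hg.deriv_deriv_comp_line]
  refine IsLocalMax.deriv_deriv_nonpos ?_ (hg.continuousAt.comp_of_eq (by fun_prop) (by simp))
  have h' : IsLocalMax g ((fun t : ℝ => z + t • v) 0) := by simpa using h
  exact IsLocalMax.comp_continuous (g := fun t : ℝ => z + t • v) h' (by fun_prop)

end NormedSpace

section InnerProductSpace

variable {E : Type*} [NormedAddCommGroup E] [InnerProductSpace ℝ E]

lemma deriv_deriv_log_sub_norm_sq_comp_line {r : ℝ} {z : E} (hz : ‖z‖ < r) (v : E) :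
    deriv (deriv fun t : ℝ => Real.log (r ^ 2 - ‖z + t • v‖ ^ 2)) 0
      = -(2 * ‖v‖ ^ 2) / (r ^ 2 - ‖z‖ ^ 2) - (2 * ⟪z, v⟫) ^ 2 / (r ^ 2 - ‖z‖ ^ 2) ^ 2 := by
  set Q : ℝ → ℝ := fun t => r ^ 2 - ‖z + t • v‖ ^ 2
  have hline := hasDerivAt_add_smul z v
  have hQ : ∀ t, HasDerivAt Q (-(2 * ⟪z + t • v, v⟫)) t := fun t =>
    (hline t).norm_sq.const_sub _
  have hQ0 : 0 < Q 0 := by simp only [Q, zero_smul, add_zero]; nlinarith [norm_nonneg z]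
  have hfirst : deriv (fun t => Real.log (Q t)) =ᶠ[𝓝 0]
      fun t => -(2 * ⟪z + t • v, v⟫) / Q t := by
    filter_upwards [(hQ 0).continuousAt.eventually (eventually_gt_nhds hQ0)] with t ht
    exact ((hQ t).log ht.ne').deriv
  have hnum : HasDerivAt (fun t : ℝ => -(2 * ⟪z + t • v, v⟫)) (-(2 * ‖v‖ ^ 2)) 0 := by
    simpa [real_inner_self_eq_norm_sq] using
      (((hline 0).inner ℝ (hasDerivAt_const 0 v)).const_mul 2).fun_neg
  rw [hfirst.deriv_eq, (hnum.fun_div (hQ 0) hQ0.ne').deriv]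
  simp only [Q, zero_smul, add_zero]
  field_simp

lemma contDiffAt_log_sub_norm_sq {r : ℝ} {z : E} (hz : ‖z‖ < r) :
    ContDiffAt ℝ 2 (fun w => Real.log (r ^ 2 - ‖w‖ ^ 2)) z :=
  (contDiffAt_const.sub (contDiff_norm_sq ℝ).contDiffAt).log
    (by nlinarith [norm_nonneg z])

end InnerProductSpace

open scoped Laplacian in
lemma laplacian_eq_laplacian_of_contDiffAt {f : ℂ → ℝ} {z : ℂ} (hf : ContDiffAt ℝ 2 f z) :
    laplacian f z = Δ f z := by
  simp only [laplacian, InnerProductSpace.laplacian_eq_iteratedFDeriv_complexPlane,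
    iteratedFDeriv_two_apply, fderiv_fderiv_apply_apply hf.differentiableAt_fderiv]
  rfl

lemma laplacian_add_of_contDiffAt {u w : ℂ → ℝ} {z : ℂ} (hu : ContDiffAt ℝ 2 u z)
    (hw : ContDiffAt ℝ 2 w z) :
    laplacian (fun y => u y + w y) z = laplacian u z + laplacian w z := by
  rw [laplacian_eq_laplacian_of_contDiffAt (hu.add hw),
    laplacian_eq_laplacian_of_contDiffAt hu, laplacian_eq_laplacian_of_contDiffAt hw]
  exact hu.laplacian_add hw

lemma IsLocalMax.laplacian_nonpos {g : ℂ → ℝ} {z : ℂ} (h : IsLocalMax g z)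
    (hg : ContDiffAt ℝ 2 g z) : laplacian g z ≤ 0 :=
  add_nonpos (h.fderiv_fderiv_apply_nonpos hg 1) (h.fderiv_fderiv_apply_nonpos hg I)

lemma laplacian_log_sub_norm_sq {r : ℝ} {z : ℂ} (hz : ‖z‖ < r) :
    laplacian (fun w => Real.log (r ^ 2 - ‖w‖ ^ 2)) z = -(4 * r ^ 2) / (r ^ 2 - ‖z‖ ^ 2) ^ 2 := by
  have hC2 := contDiffAt_log_sub_norm_sq hz
  have hP : r ^ 2 - ‖z‖ ^ 2 ≠ 0 := by nlinarith [norm_nonneg z]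
  rw [laplacian, ← hC2.deriv_deriv_comp_line, ← hC2.deriv_deriv_comp_line,
    deriv_deriv_log_sub_norm_sq_comp_line hz, deriv_deriv_log_sub_norm_sq_comp_line hz]
  simp only [Complex.inner, Complex.sq_norm, normSq_apply, norm_one, norm_I, mul_re, conj_re,
    conj_im, one_re, one_im, I_re, I_im]
  field_simp
  ring

lemma exp_mul_sub_norm_sq_le_of_isLocalMax {u : ℂ → ℝ} {r : ℝ} {z : ℂ} (hr : 0 ≤ r)
    (hz : ‖z‖ < r) (hu : ContDiffAt ℝ 2 u z) (hcurv : 4 * Real.exp (2 * u z) ≤ laplacian u z)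
    (hmax : IsLocalMax (fun w => u w + Real.log (r ^ 2 - ‖w‖ ^ 2)) z) :
    Real.exp (u z) * (r ^ 2 - ‖z‖ ^ 2) ≤ r := by
  have hlog := contDiffAt_log_sub_norm_sq hz
  have hP : 0 < r ^ 2 - ‖z‖ ^ 2 := by nlinarith [norm_nonneg z]
  have hlap : laplacian u z ≤ 4 * (r ^ 2 / (r ^ 2 - ‖z‖ ^ 2) ^ 2) := by
    have := hmax.laplacian_nonpos (hu.add hlog)
    rw [laplacian_add_of_contDiffAt hu hlog, laplacian_log_sub_norm_sq hz, neg_div,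
      mul_div_assoc] at this
    linarith
  have hsq : (Real.exp (u z) * (r ^ 2 - ‖z‖ ^ 2)) ^ 2 ≤ r ^ 2 := by
    rw [mul_pow, ← Real.exp_nat_mul, ← le_div_iff₀ (by positivity)]
    push_cast
    linarith
  exact pow_le_pow_iff_left₀ (by positivity) hr two_ne_zero |>.1 hsq

lemma IsLocalMax.log {α : Type*} [TopologicalSpace α] {f : α → ℝ} {a : α} (h : IsLocalMax f a)
    (hpos : ∀ᶠ x in 𝓝 a, 0 < f x) : IsLocalMax (fun x => Real.log (f x)) a :=
  (h.and hpos).mono fun _ hx => Real.log_le_log hx.2 hx.1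

open Metric in
lemma exp_mul_sub_norm_sq_le {u : ℂ → ℝ} (hu : ContDiffOn ℝ 2 u (ball 0 1))
    (hcurv : ∀ z ∈ ball (0 : ℂ) 1, 4 * Real.exp (2 * u z) ≤ laplacian u z) {r : ℝ} (hr : r < 1)
    {z : ℂ} (hz : ‖z‖ < r) : Real.exp (u z) * (r ^ 2 - ‖z‖ ^ 2) ≤ r := by
  have hr0 : 0 ≤ r := (norm_nonneg z).trans hz.le
  have hK : closedBall (0 : ℂ) r ⊆ ball 0 1 := closedBall_subset_ball hr
  obtain ⟨z₀, hz₀K, hmax⟩ := (isCompact_closedBall (0 : ℂ) r).exists_isMaxOn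
    (f := fun w => Real.exp (u w) * (r ^ 2 - ‖w‖ ^ 2)) ⟨0, mem_closedBall_self hr0⟩
    ((Real.continuous_exp.comp_continuousOn (hu.continuousOn.mono hK)).mul
      (continuous_const.sub (continuous_norm.pow 2)).continuousOn)
  have hzK : z ∈ closedBall 0 r := mem_closedBall_zero_iff.2 hz.le
  have hz₀ : ‖z₀‖ < r := by
    have hpos : 0 < Real.exp (u z₀) * (r ^ 2 - ‖z₀‖ ^ 2) :=
      (mul_pos (Real.exp_pos _) (by nlinarith [norm_nonneg z])).trans_le (hmax hzK)
    nlinarith [pos_of_mul_pos_right hpos (Real.exp_pos _).le, norm_nonneg z₀]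
  have hP : ∀ᶠ w in 𝓝 z₀, 0 < r ^ 2 - ‖w‖ ^ 2 :=
    eventually_of_mem (isOpen_ball.mem_nhds (mem_ball_zero_iff.2 hz₀)) fun w hw => by
      nlinarith [mem_ball_zero_iff.1 hw, norm_nonneg w]
  have hlocal : IsLocalMax (fun w => u w + Real.log (r ^ 2 - ‖w‖ ^ 2)) z₀ := by
    have hFmax := hmax.isLocalMax (closedBall_mem_nhds_of_mem (mem_ball_zero_iff.2 hz₀))
    refine (hFmax.log (hP.mono fun w hw => by positivity)).congr (hP.mono fun w hw => ?_)
    simp only [Real.log_mul (Real.exp_pos _).ne' hw.ne', Real.log_exp]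
  exact (hmax hzK).trans <| exp_mul_sub_norm_sq_le_of_isLocalMax hr0 hz₀
    (hu.contDiffAt (isOpen_ball.mem_nhds (hK hz₀K))) (hcurv z₀ (hK hz₀K)) hlocal

/-- **Ahlfors–Schwarz lemma**, conformal metric form on the disk: any conformal metric
`e^u|dz|` on `𝔻` of Gauss curvature at most `-1` (i.e. `Δu ≥ 4e^{2u}`) is dominated by the
Poincaré metric `|dz|/(1 - |z|²)`. -/
theorem ahlfors_schwarz_conformal (u : ℂ → ℝ)
    (hu : ContDiffOn ℝ 2 u (Metric.ball (0 : ℂ) 1))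
    (hcurv : ∀ z ∈ Metric.ball (0 : ℂ) 1, 4 * Real.exp (2 * u z) ≤ laplacian u z) :
    ∀ z ∈ Metric.ball (0 : ℂ) 1, Real.exp (u z) ≤ 1 / (1 - ‖z‖ ^ 2) := by
  intro z hz
  have hz1 : ‖z‖ < 1 := mem_ball_zero_iff.1 hz
  have hclosed : IsClosed {r : ℝ | Real.exp (u z) * (r ^ 2 - ‖z‖ ^ 2) ≤ r} :=
    isClosed_le (by fun_prop) continuous_id
  have h1 : Real.exp (u z) * (1 ^ 2 - ‖z‖ ^ 2) ≤ 1 :=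
    hclosed.closure_subset_iff.2
      (fun r (hr : r ∈ Ioo ‖z‖ 1) => exp_mul_sub_norm_sq_le hu hcurv hr.2 hr.1)
      (by rw [closure_Ioo hz1.ne]; exact right_mem_Icc.2 hz1.le)
  rw [le_div_iff₀ (by nlinarith [norm_nonneg z])]
  simpa using h1
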